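/- arXiv:1903.05833 — 6 statements merged into one kernel-verified Lean document; each statement's English description precedes it below -/
import Mathlib

section
/- Let Ω be a finite set, p a probability mass function on Ω, R : Ω → {0,1} with μ = E_p[R] > 0, and q a probability mass function with q(x) > 0 whenever R(x)p(x) > 0. Let q*(x) = R(x)p(x)/μ. Then the one-run variance of the IS estimator satisfies the lower bound σ_q² = E_q[(R(x)p(x)/q(x))²] − μ² ≥ μ²·KL(q*‖q), where KL is the Kullback–Leibler divergence in natural log (or: σ_q² ≥ μ²·KL(q*‖q) with log base such that the inequality from Jensen applies). -/
open Finset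

/-- KL lower bound on the one-run variance of an importance sampling
estimator: `σ_q² ≥ μ² · KL(q*‖q)`. -/
theorem is_variance_lower_bound_kl
    {Ω : Type*} [Fintype Ω]
    (p : Ω → ℝ) (hp : ∀ x, 0 ≤ p x) (hp1 : ∑ x, p x = 1)
    (R : Ω → ℝ) (hR : ∀ x, R x = 0 ∨ R x = 1)
    (μ : ℝ) (hμ : μ = ∑ x, R x * p x) (hμpos : 0 < μ)
    (q : Ω → ℝ) (hq0 : ∀ x, 0 ≤ q x) (hq1 : ∑ x, q x = 1)
    (hqsupp : ∀ x, 0 < R x * p x → 0 < q x)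
    (qstar : Ω → ℝ) (hqstar : ∀ x, qstar x = R x * p x / μ)
    (σ2 : ℝ) (hσ2 : σ2 = (∑ x, (R x * p x) ^ 2 / q x) - μ ^ 2)
    (KL : ℝ) (hKL : KL = ∑ x, qstar x * Real.log (qstar x / q x)) :
    μ ^ 2 * KL ≤ σ2 := by
  have hRp : ∀ x, 0 ≤ R x * p x := by
    intro x
    rcases hR x with h | h <;> simp [h, hp x]
  have hqs0 : ∀ x, 0 ≤ qstar x := by
    intro x; rw [hqstar x]; exact div_nonneg (hRp x) hμpos.le
  have hsum : ∑ x, qstar x = 1 := by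
    simp only [hqstar]
    rw [← Finset.sum_div, ← hμ, div_self hμpos.ne']
  have key : ∀ x, μ ^ 2 * (qstar x * Real.log (qstar x / q x)) ≤
      (R x * p x) ^ 2 / q x - μ ^ 2 * qstar x := by
    intro x
    rcases eq_or_lt_of_le (hqs0 x) with h | h
    · have hrp : R x * p x = 0 := by
        have h2 : R x * p x / μ = 0 := by rw [← hqstar x, ← h]
        rcases div_eq_zero_iff.mp h2 with h3 | h3
        · exact h3
        · exact absurd h3 hμpos.ne'
      simp [← h, hrp]
    · have hrp : 0 < R x * p x := by
        by_contra hc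
        push_neg at hc
        have : R x * p x = 0 := le_antisymm hc (hRp x)
        rw [hqstar x, this] at h
        simp at h
      have hqx : 0 < q x := hqsupp x hrp
      have hlog : Real.log (qstar x / q x) ≤ qstar x / q x - 1 :=
        Real.log_le_sub_one_of_pos (div_pos h hqx)
      have hRpq : R x * p x = μ * qstar x := by
        rw [hqstar x]; field_simp
      have h1 : μ ^ 2 * (qstar x * Real.log (qstar x / q x)) ≤
          μ ^ 2 * (qstar x * (qstar x / q x - 1)) := by
        apply mul_le_mul_of_nonneg_left _ (by positivity)
        exact mul_le_mul_of_nonneg_left hlog h.le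
      refine h1.trans_eq ?_
      rw [hRpq]
      field_simp
  have hsum_le : ∑ x, μ ^ 2 * (qstar x * Real.log (qstar x / q x)) ≤
      ∑ x, ((R x * p x) ^ 2 / q x - μ ^ 2 * qstar x) :=
    Finset.sum_le_sum fun x _ => key x
  rw [hσ2, hKL, Finset.mul_sum]
  have : ∑ x, ((R x * p x) ^ 2 / q x - μ ^ 2 * qstar x) =
      (∑ x, (R x * p x) ^ 2 / q x) - μ ^ 2 := by
    rw [Finset.sum_sub_distrib, ← Finset.mul_sum, hsum, mul_one]
  linarith [hsum_le, this.symm.le]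
end

section
/- Let Ω be a finite set, p a probability mass function, R : Ω → {0,1} with μ = E_p[R] > 0, q* the zero-variance distribution q*(x) = R(x)p(x)/μ, and q any distribution with q(x) > 0 for all x with q*(x) > 0. Then the one-run IS variance satisfies the upper bound σ_q² ≤ μ² · √(2 log 2 · KL(q*‖q)) / min_{x : q*(x)>0} q(x). -/
open Finset

lemma aux_mul_log_ge (t : ℝ) (ht : 0 < t) : t - 1 ≤ t * Real.log t := by
  have h := Real.log_le_sub_one_of_pos (show 0 < t⁻¹ by positivity)
  rw [Real.log_inv] at h
  have h2 : t * t⁻¹ = 1 := mul_inv_cancel₀ ht.ne'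
  nlinarith [h, ht]

lemma F_nonneg (t : ℝ) (ht : 1 ≤ t) :
    0 ≤ 2*t^2*Real.log t - 3*t^2 + 4*t - 1 := by
  set F : ℝ → ℝ := fun s => 2*s^2*Real.log s - 3*s^2 + 4*s - 1 with hF
  have key : MonotoneOn F (Set.Ici 1) := by
    have hderiv : ∀ x ∈ Set.Ioi (1:ℝ), HasDerivAt F (4*x*Real.log x + 2*x - 6*x + 4) x := by
      intro x hx
      have hx0 : (0:ℝ) < x := lt_trans one_pos hx
      have h1 : HasDerivAt (fun s : ℝ => s^2) (2*x) x := by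
        simpa using hasDerivAt_pow 2 x
      have h2 : HasDerivAt Real.log x⁻¹ x := Real.hasDerivAt_log hx0.ne'
      have h3 : HasDerivAt (fun s : ℝ => s^2 * Real.log s)
          (2*x*Real.log x + x^2 * x⁻¹) x := h1.mul h2
      have h4 : HasDerivAt F (2*(2*x*Real.log x + x^2 * x⁻¹) - 3*(2*x) + 4) x := by
        have := ((h3.const_mul 2).sub (h1.const_mul 3)).add_const (-1 : ℝ)
        have h5 := this.add ((hasDerivAt_id x).const_mul 4)
        refine (h5.congr_deriv (by ring)).congr_of_eventuallyEq (Filter.Eventually.of_forall fun s => ?_)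
        simp only [hF, Pi.add_apply, Pi.sub_apply, id]; ring
      convert h4 using 1
      field_simp
      ring
    apply monotoneOn_of_deriv_nonneg (convex_Ici 1)
    · apply ContinuousOn.sub
      apply ContinuousOn.add
      apply ContinuousOn.sub
      · exact (continuousOn_const.mul (continuousOn_pow 2)).mul
          (Real.continuousOn_log.mono (by intro x hx; simp at hx ⊢; linarith))
      · exact continuousOn_const.mul (continuousOn_pow 2)
      · exact continuousOn_const.mul continuousOn_id
      · exact continuousOn_const
    · intro x hx
      rw [interior_Ici] at hx
      exact ((hderiv x hx).differentiableAt).differentiableWithinAt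
    · intro x hx
      rw [interior_Ici] at hx
      rw [(hderiv x hx).deriv]
      have hx1 : (1:ℝ) < x := hx
      have := aux_mul_log_ge x (lt_trans one_pos hx1)
      nlinarith
  have h1 : F 1 ≤ F t := key (by simp) (Set.mem_Ici.mpr ht) ht
  simp only [hF, Real.log_one] at h1
  nlinarith [h1]

lemma G_nonneg (t : ℝ) (ht0 : 0 < t) (ht1 : t ≤ 1) :
    0 ≤ t*Real.log t - t + 1 - (t-1)^2/2 := by
  set G : ℝ → ℝ := fun s => s*Real.log s - s + 1 - (s-1)^2/2 with hG
  have key : AntitoneOn G (Set.Ioc 0 1) := by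
    have hderiv : ∀ x ∈ Set.Ioo (0:ℝ) 1, HasDerivAt G (Real.log x + x * x⁻¹ - 1 - (x-1)) x := by
      intro x hx
      have hx0 : (0:ℝ) < x := hx.1
      have h2 : HasDerivAt Real.log x⁻¹ x := Real.hasDerivAt_log hx0.ne'
      have h3 : HasDerivAt (fun s : ℝ => s * Real.log s) (1 * Real.log x + x * x⁻¹) x :=
        (hasDerivAt_id x).mul h2
      have h4 : HasDerivAt (fun s : ℝ => (s-1)^2/2) ((2 * (x-1)^1 * 1)/2) x := by
        exact (((hasDerivAt_id x).sub_const 1).pow 2).div_const 2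
      have h5 := ((h3.sub (hasDerivAt_id x)).add_const (1:ℝ)).sub h4
      refine (h5.congr_deriv (by ring)).congr_of_eventuallyEq (Filter.Eventually.of_forall fun s => ?_)
      simp only [hG, Pi.add_apply, Pi.sub_apply, id]
    apply antitoneOn_of_deriv_nonpos (convex_Ioc 0 1)
    · apply ContinuousOn.sub
      apply ContinuousOn.add
      apply ContinuousOn.sub
      · exact continuousOn_id.mul
          (Real.continuousOn_log.mono (by intro x hx; simp at hx ⊢; exact ne_of_gt hx.1))
      · exact continuousOn_id
      · exact continuousOn_const
      · exact (((continuousOn_id.sub continuousOn_const).pow 2).div_const 2)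
    · intro x hx
      rw [interior_Ioc] at hx
      exact ((hderiv x hx).differentiableAt).differentiableWithinAt
    · intro x hx
      rw [interior_Ioc] at hx
      rw [(hderiv x hx).deriv]
      have hlog := Real.log_le_sub_one_of_pos hx.1
      have : x * x⁻¹ = 1 := mul_inv_cancel₀ hx.1.ne'
      nlinarith [hx.2]
  have h1 : G t ≥ G 1 := key (Set.mem_Ioc.mpr ⟨ht0, ht1⟩) (by simp) ht1
  simp only [hG, Real.log_one] at h1
  nlinarith [h1]

lemma pointwise_kl (a b : ℝ) (ha : 0 ≤ a) (hb : 0 ≤ b) (hab : a = 0 ∨ 0 < b) :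
    a - b + (a-b)^2/(2 * max a b) ≤ a * Real.log (a/b) := by
  rcases ha.eq_or_lt with ha0 | hapos
  · subst a
    rcases hb.eq_or_lt with hb0 | hbpos
    · simp [← hb0]
    · rw [max_eq_right hb]
      have h2 : ((0:ℝ) - b)^2/(2*b) = b/2 := by field_simp; ring
      rw [h2, zero_mul]
      linarith
  · have hbpos : 0 < b := hab.resolve_left hapos.ne'
    set L := Real.log (a/b) with hL
    rcases le_total b a with hba | hab2
    · rw [max_eq_left hba]
      have h1 : (1:ℝ) ≤ a/b := (one_le_div hbpos).mpr hba
      have hF := F_nonneg (a/b) h1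
      have hFb : 0 ≤ (2*(a/b)^2*L - 3*(a/b)^2 + 4*(a/b) - 1) * b^2 :=
        mul_nonneg hF (sq_nonneg b)
      have hclean : 0 ≤ 2*a^2*L - 3*a^2 + 4*a*b - b^2 := by
        have e : (2*(a/b)^2*L - 3*(a/b)^2 + 4*(a/b) - 1) * b^2
            = 2*a^2*L - 3*a^2 + 4*a*b - b^2 := by
          field_simp
        linarith [e ▸ hFb]
      have goal2 : (a-b)^2 ≤ (a*L - a + b) * (2*a) := by nlinarith [hclean]
      have : (a-b)^2/(2*a) ≤ a*L - a + b := by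
        rw [div_le_iff₀ (by positivity : (0:ℝ) < 2*a)]
        exact goal2
      linarith
    · rw [max_eq_right hab2]
      have hG := G_nonneg (a/b) (by positivity) ((div_le_one hbpos).mpr hab2)
      have hGb : 0 ≤ ((a/b)*L - (a/b) + 1 - ((a/b)-1)^2/2) * b := mul_nonneg hG hbpos.le
      have hclean : 0 ≤ a*L - a + b - (a-b)^2/(2*b) := by
        have e : ((a/b)*L - (a/b) + 1 - ((a/b)-1)^2/2) * b = a*L - a + b - (a-b)^2/(2*b) := by
          field_simp
        linarith [e ▸ hGb]
      linarith
set_option maxHeartbeats 1000000 in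
/-- Pinsker-type upper bound on the one-run variance of an importance
sampling estimator:
`σ_q² ≤ μ² · √(2 log 2 · KL(q*‖q)) / min_{x : q*(x)>0} q(x)`. -/
theorem is_variance_upper_bound_kl
    {Ω : Type*} [Fintype Ω]
    (p : Ω → ℝ) (hp : ∀ x, 0 ≤ p x) (hp1 : ∑ x, p x = 1)
    (R : Ω → ℝ) (hR : ∀ x, R x = 0 ∨ R x = 1)
    (μ : ℝ) (hμ : μ = ∑ x, R x * p x) (hμpos : 0 < μ)
    (qstar : Ω → ℝ) (hqstar : ∀ x, qstar x = R x * p x / μ)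
    (q : Ω → ℝ) (hq0 : ∀ x, 0 ≤ q x) (hq1 : ∑ x, q x = 1)
    (hqsupp : ∀ x, 0 < qstar x → 0 < q x)
    (σ2 : ℝ) (hσ2 : σ2 = (∑ x, (R x * p x) ^ 2 / q x) - μ ^ 2)
    (KL : ℝ) (hKL : KL = ∑ x, qstar x * Real.log (qstar x / q x))
    -- `qmin` is the minimum of `q` over the support of `q*`
    (qmin : ℝ) (hqmin : IsLeast {y | ∃ x, 0 < qstar x ∧ y = q x} qmin) :
    σ2 ≤ μ ^ 2 * Real.sqrt (2 * Real.log 2 * KL) / qmin := by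
  have hμ0 : μ ≠ 0 := ne_of_gt hμpos
  have hs0 : ∀ x, 0 ≤ qstar x := by
    intro x; rw [hqstar]
    rcases hR x with h | h
    · simp [h]
    · rw [h, one_mul]
      exact div_nonneg (hp x) hμpos.le
  have hs1 : ∑ x, qstar x = 1 := by
    simp only [hqstar]
    rw [← Finset.sum_div, ← hμ, div_self hμ0]
  have hsle1 : ∀ x, qstar x ≤ 1 := by
    intro x
    rw [← hs1]
    exact Finset.single_le_sum (fun i _ => hs0 i) (mem_univ x)
  obtain ⟨⟨x₀, hx₀s, hx₀e⟩, hlb⟩ := hqmin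
  have hqminpos : 0 < qmin := hx₀e ▸ hqsupp x₀ hx₀s
  have hqminle : ∀ x, 0 < qstar x → qmin ≤ q x := fun x hx => hlb ⟨x, hx, rfl⟩
  set d : Ω → ℝ := fun x => qstar x - q x with hd
  set T : ℝ := ∑ x, max (d x) 0 with hT
  have hT0 : 0 ≤ T := Finset.sum_nonneg fun x _ => le_max_right _ _
  have hT1 : T ≤ 1 := by
    rw [← hs1]
    refine Finset.sum_le_sum fun x _ => max_le ?_ (hs0 x)
    simp only [hd]
    linarith [hq0 x]
  have hdsum : ∑ x, d x = 0 := by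
    simp only [hd, Finset.sum_sub_distrib, hs1, hq1, sub_self]
  set KL' : ℝ := ∑ x, (d x)^2/(2 * max (qstar x) (q x)) with hKL'
  have hterm : ∀ x, d x + (d x)^2/(2*max (qstar x) (q x)) ≤ qstar x * Real.log (qstar x / q x) := by
    intro x
    have hor : qstar x = 0 ∨ 0 < q x := by
      rcases (hs0 x).eq_or_lt with h | h
      · exact Or.inl h.symm
      · exact Or.inr (hqsupp x h)
    exact pointwise_kl (qstar x) (q x) (hs0 x) (hq0 x) hor
  have hKL'le : KL' ≤ KL := by
    rw [hKL]
    have h := Finset.sum_le_sum (s := univ) (fun x _ => hterm x)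
    rw [Finset.sum_add_distrib, hdsum, zero_add] at h
    exact h
  have hKL'0 : 0 ≤ KL' := by
    refine Finset.sum_nonneg fun x _ => div_nonneg (sq_nonneg _) ?_
    have := le_trans (hs0 x) (le_max_left (qstar x) (q x))
    linarith
  have hKL0 : 0 ≤ KL := le_trans hKL'0 hKL'le
  -- Cauchy–Schwarz
  have habs : ∑ x, |d x| = 2*T := by
    have e : ∀ x, |d x| = 2 * max (d x) 0 - d x := by
      intro x
      rcases le_total (d x) 0 with h | h
      · rw [abs_of_nonpos h, max_eq_right h]; ring
      · rw [abs_of_nonneg h, max_eq_left h]; ring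
    rw [Finset.sum_congr rfl (fun x _ => e x), Finset.sum_sub_distrib, hdsum,
      ← Finset.mul_sum]
    ring
  have hsummax : ∑ x, 2*max (qstar x) (q x) = 2 + 2*T := by
    have e : ∀ x, 2*max (qstar x) (q x) = qstar x + q x + |d x| := by
      intro x
      rcases le_total (qstar x) (q x) with h | h
      · rw [max_eq_right h, abs_of_nonpos (by simp only [hd]; linarith)]
        simp only [hd]; ring
      · rw [max_eq_left h, abs_of_nonneg (by simp only [hd]; linarith)]
        simp only [hd]; ring
    rw [Finset.sum_congr rfl (fun x _ => e x)]
    rw [Finset.sum_add_distrib, Finset.sum_add_distrib, hs1, hq1, habs]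
    ring
  have hCS : (∑ x, |d x|)^2 ≤ KL' * (∑ x, 2 * max (qstar x) (q x)) := by
    have key := Finset.sum_mul_sq_le_sq_mul_sq univ
      (fun x => Real.sqrt ((d x)^2/(2*max (qstar x) (q x))))
      (fun x => Real.sqrt (2*max (qstar x) (q x)))
    have e1 : ∀ x : Ω, Real.sqrt ((d x)^2/(2*max (qstar x) (q x))) *
        Real.sqrt (2*max (qstar x) (q x)) = |d x| := by
      intro x
      have hm0 : 0 ≤ max (qstar x) (q x) := le_trans (hs0 x) (le_max_left _ _)
      rcases hm0.eq_or_lt with h | h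
      · have hq' : q x = 0 := le_antisymm (by rw [h]; exact le_max_right _ _) (hq0 x)
        have hs' : qstar x = 0 := le_antisymm (by rw [h]; exact le_max_left _ _) (hs0 x)
        simp [hd, hq', hs']
      · rw [← Real.sqrt_mul (by positivity)]
        rw [div_mul_cancel₀ _ (by positivity : 2*max (qstar x) (q x) ≠ 0)]
        exact Real.sqrt_sq_eq_abs _
    have e2 : ∀ x : Ω, (Real.sqrt ((d x)^2/(2*max (qstar x) (q x))))^2
        = (d x)^2/(2*max (qstar x) (q x)) := by
      intro x
      refine Real.sq_sqrt (div_nonneg (sq_nonneg _) ?_)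
      have := le_trans (hs0 x) (le_max_left (qstar x) (q x))
      linarith
    have e3 : ∀ x : Ω, (Real.sqrt (2*max (qstar x) (q x)))^2 = 2*max (qstar x) (q x) := by
      intro x
      refine Real.sq_sqrt ?_
      have := le_trans (hs0 x) (le_max_left (qstar x) (q x))
      linarith
    calc (∑ x, |d x|)^2
        = (∑ x, Real.sqrt ((d x)^2/(2*max (qstar x) (q x))) *
            Real.sqrt (2*max (qstar x) (q x)))^2 := by
          rw [Finset.sum_congr rfl (fun x _ => (e1 x).symm)]
      _ ≤ (∑ x, (Real.sqrt ((d x)^2/(2*max (qstar x) (q x))))^2) *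
            (∑ x, (Real.sqrt (2*max (qstar x) (q x)))^2) := key
      _ = KL' * (∑ x, 2 * max (qstar x) (q x)) := by
          rw [Finset.sum_congr rfl (fun x _ => e2 x), Finset.sum_congr rfl (fun x _ => e3 x)]
  rw [habs, hsummax] at hCS
  have hTsq : T^2 ≤ KL' := by nlinarith [hCS, hT1, hKL'0]
  have hlog2 : (1:ℝ) ≤ 2 * Real.log 2 := by
    have := Real.log_two_gt_d9
    linarith
  have hTle : T ≤ Real.sqrt (2*Real.log 2 * KL) := by
    have h1 : T^2 ≤ 2*Real.log 2 * KL := by nlinarith [hTsq, hKL'le, hKL0]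
    calc T = Real.sqrt (T^2) := (Real.sqrt_sq hT0).symm
      _ ≤ _ := Real.sqrt_le_sqrt h1
  -- variance computation
  have hσ : σ2 = μ^2 * ∑ x, (qstar x^2 / q x - qstar x) := by
    rw [hσ2]
    have e : ∀ x : Ω, (R x * p x)^2 / q x = μ^2 * (qstar x^2 / q x) := by
      intro x
      have hRp : R x * p x = μ * qstar x := by rw [hqstar]; field_simp
      rw [hRp, mul_pow, mul_div_assoc]
    rw [Finset.sum_congr rfl (fun x _ => e x), ← Finset.mul_sum]
    have h2 : ∑ x, (qstar x^2/q x - qstar x) = (∑ x, qstar x^2/q x) - 1 := by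
      rw [Finset.sum_sub_distrib, hs1]
    rw [h2]
    ring
  have hptwise : ∀ x, qstar x^2/q x - qstar x ≤ max (d x) 0 / qmin := by
    intro x
    rcases (hs0 x).eq_or_lt with h0 | hpos
    · rw [← h0]
      have : max (d x) 0 = 0 := max_eq_right (by simp only [hd, ← h0]; linarith [hq0 x])
      rw [this]
      simp
    · have hqpos : 0 < q x := hqsupp x hpos
      have hqm : qmin ≤ q x := hqminle x hpos
      rcases le_total (qstar x) (q x) with h | h
      · have hle : qstar x^2/q x - qstar x ≤ 0 := by
          rw [sub_nonpos, div_le_iff₀ hqpos]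
          nlinarith
        have : 0 ≤ max (d x) 0 / qmin := div_nonneg (le_max_right _ _) hqminpos.le
        linarith
      · have hmax : max (d x) 0 = d x := max_eq_left (by simp only [hd]; linarith)
        rw [hmax]
        have h1 : qstar x^2/q x - qstar x = qstar x * (d x) / q x := by
          simp only [hd]; field_simp
        rw [h1]
        have hdx0 : 0 ≤ d x := by simp only [hd]; linarith
        have hnum : qstar x * d x ≤ d x := by nlinarith [hsle1 x]
        exact div_le_div₀ hdx0 hnum hqminpos hqm
  calc σ2 = μ^2 * ∑ x, (qstar x^2 / q x - qstar x) := hσ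
    _ ≤ μ^2 * ∑ x, max (d x) 0 / qmin := by
        apply mul_le_mul_of_nonneg_left (Finset.sum_le_sum fun x _ => hptwise x) (sq_nonneg μ)
    _ = μ^2 * T / qmin := by rw [← Finset.sum_div, ← hT, mul_div_assoc]
    _ ≤ μ^2 * Real.sqrt (2*Real.log 2 * KL) / qmin := by
        exact div_le_div₀ (by positivity)
          (mul_le_mul_of_nonneg_left hTle (sq_nonneg μ)) hqminpos le_rfl
end

section
/- (BRE condition) Consider a family of problems indexed by a rarity parameter ε → 0: Ω = {0,1}^n, product distribution p_ε, R : Ω → {0,1}, μ(ε) = E_{p_ε}[R] → 0. Suppose approximations P̂[R=1|x_{1:i}] satisfy, for each i and each partial configuration x_{1:i}, P̂[R=1|x_{1:i}] = P[R=1|x_{1:i}]·(θ_i + o(1)) as ε → 0 for some nonzero constants θ_i (with θ_0 = 1). Define the sequential importance distribution q(x) = ∏_i (P̂[R=1|x_{1:i}]/P̂[R=1|x_{1:i−1}])·p_i(x_i) (after normalization). Then the IS estimator has bounded relative error: σ_q² = O(μ²), i.e., limsup_{ε→0} σ_q/μ < ∞. -/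
open Finset Filter

private lemma sis_tele_prod (f : ℕ → ℝ) :
    ∀ n : ℕ, (∀ i, i ≤ n → f i ≠ 0) →
      ∏ i ∈ Finset.range n, f (i + 1) / f i = f n / f 0 := by
  intro n
  induction n with
  | zero => intro h; simp [div_self (h 0 le_rfl)]
  | succ n ih =>
    intro h
    rw [Finset.prod_range_succ, ih (fun i hi => h i (hi.trans n.le_succ))]
    have h0 := h 0 (Nat.zero_le _)
    have hn := h n n.le_succ
    field_simp

/-- BRE condition for sequential importance sampling: if the approximate
conditional probabilities satisfy
`P̂[R=1|x_{1:i}] = P[R=1|x_{1:i}]·(θ_i + o(1))` as `ε → 0⁺` (with `θ_0 = 1`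
and all `θ_i ≠ 0`), then the resulting SIS estimator has bounded relative
error: `σ_q² = O(μ²)`. -/
theorem sis_bounded_relative_error
    (n : ℕ)
    (R : (Fin n → Bool) → ℝ) (hR : ∀ x, R x = 0 ∨ R x = 1)
    -- family of product link-failure distributions indexed by `ε`
    (pi : ℝ → Fin n → Bool → ℝ)
    (hpi : ∀ ε, 0 < ε → ∀ i b, 0 < pi ε i b)
    (hpi1 : ∀ ε, 0 < ε → ∀ i, pi ε i false + pi ε i true = 1)
    (p : ℝ → (Fin n → Bool) → ℝ) (hp : ∀ ε x, p ε x = ∏ i, pi ε i (x i))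
    (μ : ℝ → ℝ) (hμ : ∀ ε, μ ε = ∑ x, R x * p ε x)
    (hμpos : ∀ ε, 0 < ε → 0 < μ ε)
    (hμ0 : Tendsto μ (nhdsWithin 0 (Set.Ioi 0)) (nhds 0))
    -- exact sequential conditional probabilities `P[R=1 | x_{1:i}]`
    (cond : ℝ → ℕ → (Fin n → Bool) → ℝ)
    (hcond : ∀ ε i x, cond ε i x =
      (∑ y ∈ Finset.univ.filter (fun y => ∀ j : Fin n, (j : ℕ) < i → y j = x j),
          R y * p ε y) /
      (∑ y ∈ Finset.univ.filter (fun y => ∀ j : Fin n, (j : ℕ) < i → y j = x j),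
          p ε y))
    -- approximations `P̂[R=1 | x_{1:i}]`, depending only on the prefix
    (Phat : ℝ → ℕ → (Fin n → Bool) → ℝ)
    (hPhatPrefix : ∀ ε i x y, (∀ j : Fin n, (j : ℕ) < i → x j = y j) →
      Phat ε i x = Phat ε i y)
    (hPhat0 : ∀ ε i x, cond ε i x = 0 → Phat ε i x = 0)
    (θ : ℕ → ℝ) (hθ0 : θ 0 = 1) (hθne : ∀ i ≤ n, θ i ≠ 0)
    (happrox : ∀ i ≤ n, ∀ x, (∀ ε, 0 < ε → 0 < cond ε i x) →
      Tendsto (fun ε => Phat ε i x / cond ε i x)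
        (nhdsWithin 0 (Set.Ioi 0)) (nhds (θ i)))
    -- the (normalized) sequential importance distribution built from `P̂`
    (q0 : ℝ → (Fin n → Bool) → ℝ)
    (hq0 : ∀ ε x, q0 ε x =
      ∏ i : Fin n, (Phat ε ((i : ℕ) + 1) x / Phat ε (i : ℕ) x) * pi ε i (x i))
    (q : ℝ → (Fin n → Bool) → ℝ)
    (hq : ∀ ε x, q ε x = q0 ε x / ∑ y, q0 ε y)
    -- one-run variance of the IS estimator
    (σ2 : ℝ → ℝ)
    (hσ2 : ∀ ε, σ2 ε = (∑ x, (R x * p ε x) ^ 2 / q ε x) - (μ ε) ^ 2) :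
    ∃ C : ℝ, ∀ᶠ ε in nhdsWithin 0 (Set.Ioi 0), σ2 ε ≤ C * (μ ε) ^ 2 := by
  classical
  -- handle the degenerate case n = 0
  rcases Nat.eq_zero_or_pos n with hn0 | hn
  · exfalso
    subst hn0
    have hx : ∀ x : Fin 0 → Bool, x = (fun i => i.elim0) := by
      intro x; funext i; exact i.elim0
    have huniv : (Finset.univ : Finset (Fin 0 → Bool)) = {fun i => i.elim0} := by
      ext x
      simp only [Finset.mem_univ, Finset.mem_singleton, true_iff]
      exact hx x
    have hμ1 : ∀ ε, μ ε = R (fun i => i.elim0) := by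
      intro ε
      rw [hμ, huniv, Finset.sum_singleton, hp]
      simp
    rcases hR (fun i => i.elim0) with h | h
    · have := hμpos 1 one_pos
      rw [hμ1, h] at this
      exact lt_irrefl _ this
    · have h1 : Tendsto (fun _ : ℝ => (1:ℝ)) (nhdsWithin 0 (Set.Ioi 0)) (nhds 0) := by
        refine hμ0.congr ?_
        intro ε; rw [hμ1, h]
      have := tendsto_nhds_unique h1 tendsto_const_nhds
      norm_num at this
  -- main case n ≥ 1
  set S : Finset (Fin n → Bool) := Finset.univ.filter (fun x => R x = 1) with hS
  have hmemS : ∀ x, x ∈ S ↔ R x = 1 := by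
    intro x; simp [hS]
  have hμS : ∀ ε, μ ε = ∑ x ∈ S, p ε x := by
    intro ε
    rw [hμ, hS, Finset.sum_filter]
    apply Finset.sum_congr rfl
    intro x _
    rcases hR x with h | h <;> simp [h]
  have hppos : ∀ ε, 0 < ε → ∀ x, 0 < p ε x := by
    intro ε hε x
    rw [hp]
    exact Finset.prod_pos (fun i _ => hpi ε hε i (x i))
  have hSne : S.Nonempty := by
    by_contra h
    rw [Finset.not_nonempty_iff_eq_empty] at h
    have := hμpos 1 one_pos
    rw [hμS, h] at this
    simp at this
  have hfiln : ∀ x : Fin n → Bool,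
      Finset.univ.filter (fun y => ∀ j : Fin n, (j : ℕ) < n → y j = x j) = {x} := by
    intro x
    ext y
    simp only [Finset.mem_filter, Finset.mem_univ, true_and, Finset.mem_singleton]
    constructor
    · intro h; funext j; exact h j j.isLt
    · intro h j _; rw [h]
  have hcond_n : ∀ ε x, 0 < ε → cond ε n x = R x := by
    intro ε x hε
    rw [hcond, hfiln, Finset.sum_singleton, Finset.sum_singleton, mul_div_assoc,
      div_self (hppos ε hε x).ne', mul_one]
  have hPhatn0 : ∀ ε y, R y = 0 → Phat ε n y = 0 := by
    intro ε y hy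
    apply hPhat0
    rw [hcond, hfiln, Finset.sum_singleton, hy, zero_mul, zero_div]
  have hq0_zero : ∀ ε y, R y = 0 → q0 ε y = 0 := by
    intro ε y hy
    rw [hq0]
    apply Finset.prod_eq_zero (Finset.mem_univ (⟨n - 1, by omega⟩ : Fin n))
    have h1 : ((⟨n - 1, by omega⟩ : Fin n) : ℕ) + 1 = n := by simp; omega
    rw [h1, hPhatn0 ε y hy, zero_div, zero_mul]
  have hcondpos : ∀ x ∈ S, ∀ i : ℕ, ∀ ε, 0 < ε → 0 < cond ε i x := by
    intro x hx i ε hε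
    rw [hcond]
    have hxmem : x ∈ Finset.univ.filter (fun y => ∀ j : Fin n, (j : ℕ) < i → y j = x j) := by
      simp
    apply div_pos
    · apply Finset.sum_pos'
      · intro y _
        rcases hR y with h | h <;> simp [h]
        exact (hppos ε hε y).le
      · exact ⟨x, hxmem, by rw [(hmemS x).mp hx, one_mul]; exact hppos ε hε x⟩
    · exact Finset.sum_pos (fun y _ => hppos ε hε y) ⟨x, hxmem⟩
  -- eventual facts
  have key : ∀ x ∈ S, ∀ i ∈ Finset.range (n + 1),
      ∀ᶠ ε in nhdsWithin (0:ℝ) (Set.Ioi 0),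
        |Phat ε i x / cond ε i x - θ i| < |θ i| / 2 := by
    intro x hx i hi
    rw [Finset.mem_range] at hi
    have hi' : i ≤ n := by omega
    have ht := happrox i hi' x (fun ε hε => hcondpos x hx i ε hε)
    have hpos : 0 < |θ i| / 2 := by
      have := abs_pos.mpr (hθne i hi'); linarith
    have := Metric.tendsto_nhds.mp ht (|θ i| / 2) hpos
    simpa [Real.dist_eq] using this
  have hev : ∀ᶠ ε in nhdsWithin (0:ℝ) (Set.Ioi 0),
      ε ∈ Set.Ioi (0:ℝ) ∧ ∀ x ∈ S, ∀ i ∈ Finset.range (n + 1),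
        |Phat ε i x / cond ε i x - θ i| < |θ i| / 2 := by
    refine eventually_mem_nhdsWithin.and ?_
    rw [Filter.eventually_all_finset]
    intro x hx
    rw [Filter.eventually_all_finset]
    exact key x hx
  refine ⟨3, ?_⟩
  filter_upwards [hev] with ε hevε
  obtain ⟨hε', hclose⟩ := hevε
  have hε : 0 < ε := hε'
  -- Phat is nonzero along configurations in S
  have hPne : ∀ x ∈ S, ∀ i ≤ n, Phat ε i x ≠ 0 := by
    intro x hx i hi h0
    have hc := hclose x hx i (Finset.mem_range.mpr (by omega))
    rw [h0, zero_div, zero_sub, abs_neg] at hc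
    have := abs_pos.mpr (hθne i hi)
    linarith
  have hPn : ∀ x ∈ S, |Phat ε n x - θ n| < |θ n| / 2 := by
    intro x hx
    have hc := hclose x hx n (Finset.mem_range.mpr (by omega))
    rwa [hcond_n ε x hε, (hmemS x).mp hx, div_one] at hc
  have hPnb : ∀ x ∈ S, |θ n| / 2 ≤ |Phat ε n x| ∧ |Phat ε n x| ≤ 3 * |θ n| / 2 := by
    intro x hx
    have h1 := hPn x hx
    have h2 := abs_sub_abs_le_abs_sub (θ n) (Phat ε n x)
    have h3 := abs_sub_abs_le_abs_sub (Phat ε n x) (θ n)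
    rw [abs_sub_comm] at h2
    constructor <;> linarith
  obtain ⟨x₀, hx₀⟩ := hSne
  set c := Phat ε 0 x₀ with hcdef
  have hc : c ≠ 0 := hPne x₀ hx₀ 0 (Nat.zero_le n)
  have hP0 : ∀ y, Phat ε 0 y = c :=
    fun y => hPhatPrefix ε 0 y x₀ (fun j hj => absurd hj (Nat.not_lt_zero _))
  -- value of q0 on S
  have hq0S : ∀ x ∈ S, q0 ε x = Phat ε n x / c * p ε x := by
    intro x hx
    rw [hq0, Finset.prod_mul_distrib, ← hp]
    congr 1
    rw [Fin.prod_univ_eq_prod_range (fun k => Phat ε (k + 1) x / Phat ε k x) n,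
      sis_tele_prod (fun k => Phat ε k x) n (fun i hi => hPne x hx i hi), hP0 x]
  set T : ℝ := ∑ x ∈ S, Phat ε n x * p ε x with hT
  have hsum_q0 : ∑ y, q0 ε y = T / c := by
    rw [← Finset.sum_filter_add_sum_filter_not Finset.univ (fun y => R y = 1), ← hS]
    have h2 : ∑ y ∈ Finset.univ.filter (fun y => ¬ R y = 1), q0 ε y = 0 := by
      apply Finset.sum_eq_zero
      intro y hy
      rw [Finset.mem_filter] at hy
      have : R y = 0 := by rcases hR y with h | h; exact h; exact absurd h hy.2
      exact hq0_zero ε y this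
    rw [h2, add_zero, hT, Finset.sum_div]
    apply Finset.sum_congr rfl
    intro x hx
    rw [hq0S x hx, div_mul_eq_mul_div]
  have hqS : ∀ x ∈ S, q ε x = Phat ε n x * p ε x / T := by
    intro x hx
    rw [hq, hsum_q0, hq0S x hx, div_div_eq_mul_div]
    congr 1
    field_simp
  -- the second moment
  have hval : ∑ x, (R x * p ε x) ^ 2 / q ε x = T * ∑ x ∈ S, p ε x / Phat ε n x := by
    rw [← Finset.sum_filter_add_sum_filter_not Finset.univ (fun y => R y = 1), ← hS]
    have h2 : ∑ y ∈ Finset.univ.filter (fun y => ¬ R y = 1), (R y * p ε y) ^ 2 / q ε y = 0 := by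
      apply Finset.sum_eq_zero
      intro y hy
      rw [Finset.mem_filter] at hy
      have : R y = 0 := by rcases hR y with h | h; exact h; exact absurd h hy.2
      rw [this, zero_mul]
      norm_num
    rw [h2, add_zero, Finset.mul_sum]
    apply Finset.sum_congr rfl
    intro x hx
    rw [(hmemS x).mp hx, one_mul, hqS x hx, div_div_eq_mul_div]
    have hpne := (hppos ε hε x).ne'
    have hPne' := hPne x hx n le_rfl
    field_simp
  -- bounds
  have hμnn : 0 ≤ μ ε := (hμpos ε hε).le
  have hθn := abs_pos.mpr (hθne n le_rfl)
  have hTb : |T| ≤ 3 * |θ n| / 2 * μ ε := by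
    calc |T| ≤ ∑ x ∈ S, |Phat ε n x * p ε x| := Finset.abs_sum_le_sum_abs _ _
    _ ≤ ∑ x ∈ S, 3 * |θ n| / 2 * p ε x := by
        apply Finset.sum_le_sum
        intro x hx
        rw [abs_mul, abs_of_pos (hppos ε hε x)]
        exact mul_le_mul_of_nonneg_right (hPnb x hx).2 (hppos ε hε x).le
    _ = 3 * |θ n| / 2 * μ ε := by rw [hμS, Finset.mul_sum]
  have hWb : |∑ x ∈ S, p ε x / Phat ε n x| ≤ 2 / |θ n| * μ ε := by
    calc |∑ x ∈ S, p ε x / Phat ε n x| ≤ ∑ x ∈ S, |p ε x / Phat ε n x| :=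
        Finset.abs_sum_le_sum_abs _ _
    _ ≤ ∑ x ∈ S, 2 / |θ n| * p ε x := by
        apply Finset.sum_le_sum
        intro x hx
        have h1 := (hPnb x hx).1
        have h2 := (hppos ε hε x).le
        have hPh : 0 < |Phat ε n x| := lt_of_lt_of_le (by linarith) h1
        rw [abs_div, abs_of_pos (hppos ε hε x), div_le_iff₀ hPh]
        have hkey : 2 / |θ n| * p ε x * (|θ n| / 2) = p ε x := by
          field_simp
        have hmul := mul_le_mul_of_nonneg_left h1
          (by positivity : (0:ℝ) ≤ 2 / |θ n| * p ε x)
        nlinarith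
    _ = 2 / |θ n| * μ ε := by rw [hμS, Finset.mul_sum]
  rw [hσ2, hval]
  have habs : T * ∑ x ∈ S, p ε x / Phat ε n x ≤
      |T| * |∑ x ∈ S, p ε x / Phat ε n x| := by
    calc T * ∑ x ∈ S, p ε x / Phat ε n x ≤ |T * ∑ x ∈ S, p ε x / Phat ε n x| :=
        le_abs_self _
    _ = |T| * |∑ x ∈ S, p ε x / Phat ε n x| := abs_mul _ _
  have hprod : |T| * |∑ x ∈ S, p ε x / Phat ε n x| ≤
      (3 * |θ n| / 2 * μ ε) * (2 / |θ n| * μ ε) :=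
    mul_le_mul hTb hWb (abs_nonneg _) (by positivity)
  have heq : (3 * |θ n| / 2 * μ ε) * (2 / |θ n| * μ ε) = 3 * μ ε ^ 2 := by
    field_simp
  nlinarith [sq_nonneg (μ ε)]
end

section
/- (VRE condition) In the setting of sequential importance sampling with approximations P̂[R=1|x_{1:i}] satisfying P̂[R=1|x_{1:i}] = P[R=1|x_{1:i}]·(1 + o(1)) as ε → 0 for every i and every partial configuration x_{1:i}, the resulting IS estimator has vanishing relative error: σ_q² = o(μ²), i.e., σ_q/μ → 0 as ε → 0. -/
open Finset Filter

private lemma prod_range_div_telescope' (f : ℕ → ℝ) (n : ℕ) (hf : ∀ k, k ≤ n → f k ≠ 0) :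
    ∏ i ∈ Finset.range n, f (i+1) / f i = f n / f 0 := by
  induction n with
  | zero => simp [div_self (hf 0 le_rfl)]
  | succ m ih =>
      rw [Finset.prod_range_succ, ih (fun k hk => hf k (hk.trans (Nat.le_succ m)))]
      have h0 := hf 0 (Nat.zero_le _)
      have hm := hf m (Nat.le_succ_of_le (Nat.le_refl m))
      field_simp



/-- BRE condition for sequential importance sampling: if the approximate
conditional probabilities satisfy
`P̂[R=1|x_{1:i}] = P[R=1|x_{1:i}]·(1 + o(1))` as `ε → 0⁺` for every `i` and
every partial configuration, then the resulting SIS estimator has vanishing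
relative error: `σ_q² = o(μ²)`, i.e. `σ_q/μ → 0`. -/
theorem sis_vanishing_relative_error
    (n : ℕ)
    (R : (Fin n → Bool) → ℝ) (hR : ∀ x, R x = 0 ∨ R x = 1)
    -- family of product link-failure distributions indexed by `ε`
    (pi : ℝ → Fin n → Bool → ℝ)
    (hpi : ∀ ε, 0 < ε → ∀ i b, 0 < pi ε i b)
    (hpi1 : ∀ ε, 0 < ε → ∀ i, pi ε i false + pi ε i true = 1)
    (p : ℝ → (Fin n → Bool) → ℝ) (hp : ∀ ε x, p ε x = ∏ i, pi ε i (x i))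
    (μ : ℝ → ℝ) (hμ : ∀ ε, μ ε = ∑ x, R x * p ε x)
    (hμpos : ∀ ε, 0 < ε → 0 < μ ε)
    (hμ0 : Tendsto μ (nhdsWithin 0 (Set.Ioi 0)) (nhds 0))
    -- exact sequential conditional probabilities `P[R=1 | x_{1:i}]`
    (cond : ℝ → ℕ → (Fin n → Bool) → ℝ)
    (hcond : ∀ ε i x, cond ε i x =
      (∑ y ∈ Finset.univ.filter (fun y => ∀ j : Fin n, (j : ℕ) < i → y j = x j),
          R y * p ε y) /
      (∑ y ∈ Finset.univ.filter (fun y => ∀ j : Fin n, (j : ℕ) < i → y j = x j),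
          p ε y))
    -- approximations `P̂[R=1 | x_{1:i}]`, depending only on the prefix
    (Phat : ℝ → ℕ → (Fin n → Bool) → ℝ)
    (hPhatPrefix : ∀ ε i x y, (∀ j : Fin n, (j : ℕ) < i → x j = y j) →
      Phat ε i x = Phat ε i y)
    (hPhat0 : ∀ ε i x, cond ε i x = 0 → Phat ε i x = 0)
    
    (happrox : ∀ i ≤ n, ∀ x, (∀ ε, 0 < ε → 0 < cond ε i x) →
      Tendsto (fun ε => Phat ε i x / cond ε i x)
        (nhdsWithin 0 (Set.Ioi 0)) (nhds 1))
    -- the (normalized) sequential importance distribution built from `P̂`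
    (q0 : ℝ → (Fin n → Bool) → ℝ)
    (hq0 : ∀ ε x, q0 ε x =
      ∏ i : Fin n, (Phat ε ((i : ℕ) + 1) x / Phat ε (i : ℕ) x) * pi ε i (x i))
    (q : ℝ → (Fin n → Bool) → ℝ)
    (hq : ∀ ε x, q ε x = q0 ε x / ∑ y, q0 ε y)
    -- one-run variance of the IS estimator
    (σ2 : ℝ → ℝ)
    (hσ2 : ∀ ε, σ2 ε = (∑ x, (R x * p ε x) ^ 2 / q ε x) - (μ ε) ^ 2) :
    Tendsto (fun ε => σ2 ε / (μ ε) ^ 2) (nhdsWithin 0 (Set.Ioi 0)) (nhds 0) := by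
  set L := nhdsWithin (0:ℝ) (Set.Ioi 0) with hL
  set A : Finset (Fin n → Bool) := Finset.univ.filter (fun x => R x = 1) with hA
  -- positivity of p
  have hppos : ∀ ε, 0 < ε → ∀ x, 0 < p ε x := by
    intro ε hε x
    rw [hp]
    exact Finset.prod_pos (fun i _ => hpi ε hε i (x i))
  have hRnonneg : ∀ x, 0 ≤ R x := by
    intro x; rcases hR x with h | h <;> rw [h] <;> norm_num
  -- total mass of p is 1
  have hpsum : ∀ ε, 0 < ε → ∑ y, p ε y = 1 := by
    intro ε hε
    have : ∑ y : Fin n → Bool, ∏ i, pi ε i (y i) = ∏ i : Fin n, ∑ b : Bool, pi ε i b := by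
      rw [Finset.prod_univ_sum]
      rw [Fintype.piFinset_univ]
    simp only [hp]
    rw [this]
    apply Finset.prod_eq_one
    intro i _
    rw [Fintype.sum_bool, add_comm]
    exact hpi1 ε hε i
  -- cond at level 0 is μ
  have hcond0 : ∀ ε, 0 < ε → ∀ x, cond ε 0 x = μ ε := by
    intro ε hε x
    rw [hcond]
    have hfilt : Finset.univ.filter (fun y : Fin n → Bool => ∀ j : Fin n, (j : ℕ) < 0 → y j = x j)
        = Finset.univ := by
      apply Finset.filter_true_of_mem
      intro y _ j hj
      exact absurd hj (Nat.not_lt_zero _)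
    rw [hfilt, hpsum ε hε, hμ, div_one]
  -- cond at level n is R
  have hfiltn : ∀ x : Fin n → Bool,
      Finset.univ.filter (fun y : Fin n → Bool => ∀ j : Fin n, (j : ℕ) < n → y j = x j) = {x} := by
    intro x
    ext y
    simp only [Finset.mem_filter, Finset.mem_univ, true_and, Finset.mem_singleton]
    constructor
    · intro h
      exact funext (fun j => h j j.isLt)
    · intro h j _
      rw [h]
  have hcondn : ∀ ε, 0 < ε → ∀ x, cond ε n x = R x := by
    intro ε hε x
    rw [hcond, hfiltn, Finset.sum_singleton, Finset.sum_singleton, mul_div_assoc,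
      div_self (ne_of_gt (hppos ε hε x)), mul_one]
  -- cond is positive everywhere for x ∈ A
  have hcondpos : ∀ x ∈ A, ∀ k, ∀ ε, 0 < ε → 0 < cond ε k x := by
    intro x hx k ε hε
    have hxR : R x = 1 := (Finset.mem_filter.mp hx).2
    rw [hcond]
    have hxmem : x ∈ Finset.univ.filter
        (fun y : Fin n → Bool => ∀ j : Fin n, (j : ℕ) < k → y j = x j) := by
      simp
    apply div_pos
    · apply Finset.sum_pos'
      · intro y _
        exact mul_nonneg (hRnonneg y) (le_of_lt (hppos ε hε y))
      · exact ⟨x, hxmem, by rw [hxR, one_mul]; exact hppos ε hε x⟩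
    · exact Finset.sum_pos (fun y _ => hppos ε hε y) ⟨x, hxmem⟩
  -- the correction factors
  set t : ℝ → ℕ → (Fin n → Bool) → ℝ := fun ε k x => Phat ε k x / cond ε k x with ht
  set T : ℝ → (Fin n → Bool) → ℝ :=
    fun ε x => ∏ i ∈ Finset.range n, t ε (i+1) x / t ε i x with hT
  set w : ℝ → (Fin n → Bool) → ℝ := fun ε x => p ε x / μ ε with hw
  set S : ℝ → ℝ := fun ε => ∑ x ∈ A, w ε x * T ε x with hS
  have hTrfl : ∀ ε x, T ε x = ∏ i ∈ Finset.range n, t ε (i+1) x / t ε i x := fun _ _ => rfl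
  have hwrfl : ∀ ε x, w ε x = p ε x / μ ε := fun _ _ => rfl
  have hSrfl : ∀ ε, S ε = ∑ x ∈ A, w ε x * T ε x := fun _ => rfl
  -- q0 = w * T on A
  have hPhateq : ∀ ε, 0 < ε → ∀ x ∈ A, ∀ k, Phat ε k x = t ε k x * cond ε k x := by
    intro ε hε x hx k
    rw [ht]
    exact (div_mul_cancel₀ _ (ne_of_gt (hcondpos x hx k ε hε))).symm
  have hq0A : ∀ ε, 0 < ε → ∀ x ∈ A, q0 ε x = w ε x * T ε x := by
    intro ε hε x hx
    have hxR : R x = 1 := (Finset.mem_filter.mp hx).2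
    rw [hq0, Finset.prod_mul_distrib, ← hp]
    have h1 : ∏ i : Fin n, Phat ε ((i : ℕ) + 1) x / Phat ε (i : ℕ) x
        = ∏ i ∈ Finset.range n, Phat ε (i + 1) x / Phat ε i x :=
      Fin.prod_univ_eq_prod_range (fun i => Phat ε (i + 1) x / Phat ε i x) n
    rw [h1]
    have h2 : ∀ i ∈ Finset.range n, Phat ε (i+1) x / Phat ε i x
        = (t ε (i+1) x / t ε i x) * (cond ε (i+1) x / cond ε i x) := by
      intro i _
      rw [hPhateq ε hε x hx (i+1), hPhateq ε hε x hx i, mul_div_mul_comm]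
    rw [Finset.prod_congr rfl h2, Finset.prod_mul_distrib]
    have h3 : ∏ i ∈ Finset.range n, cond ε (i+1) x / cond ε i x = cond ε n x / cond ε 0 x :=
      prod_range_div_telescope' (fun k => cond ε k x) n
        (fun k _ => ne_of_gt (hcondpos x hx k ε hε))
    rw [h3, hcondn ε hε, hcond0 ε hε, hxR, hwrfl, hTrfl]
    ring
  -- q0 vanishes off A
  have hq0off : ∀ ε, 0 < ε → ∀ x, R x = 0 → q0 ε x = 0 := by
    intro ε hε x hxR
    rcases Nat.eq_zero_or_pos n with hn | hn
    · exfalso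
      have hxall : ∀ y : Fin n → Bool, y = x := by
        intro y; funext j; exact absurd j.isLt (by omega)
      have : μ ε = R x * p ε x := by
        rw [hμ]
        exact Finset.sum_eq_single_of_mem x (Finset.mem_univ x)
          (fun y _ hy => absurd (hxall y) hy)
      rw [hxR, zero_mul] at this
      exact absurd this (ne_of_gt (hμpos ε hε))
    · have hPn : Phat ε n x = 0 := hPhat0 ε n x (by rw [hcondn ε hε, hxR])
      rw [hq0]
      apply Finset.prod_eq_zero (Finset.mem_univ (⟨n-1, by omega⟩ : Fin n))
      have hcoe : ((⟨n-1, by omega⟩ : Fin n) : ℕ) + 1 = n := by simp; omega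
      rw [hcoe, hPn, zero_div, zero_mul]
  -- μ as sum over A, and sum of weights is 1
  have hμA : ∀ ε, 0 < ε → μ ε = ∑ x ∈ A, p ε x := by
    intro ε hε
    rw [hμ, ← Finset.sum_filter_add_sum_filter_not Finset.univ (fun x => R x = 1)]
    have h1 : ∀ x ∈ A, R x * p ε x = p ε x := by
      intro x hx; rw [(Finset.mem_filter.mp hx).2, one_mul]
    have h2 : ∀ x ∈ Finset.univ.filter (fun x => ¬ R x = 1), R x * p ε x = 0 := by
      intro x hx
      have := (Finset.mem_filter.mp hx).2
      rcases hR x with h | h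
      · rw [h, zero_mul]
      · exact absurd h this
    rw [Finset.sum_congr rfl h1, Finset.sum_congr rfl h2, Finset.sum_const_zero, add_zero]
  have hwsum : ∀ ε, 0 < ε → ∑ x ∈ A, w ε x = 1 := by
    intro ε hε
    simp only [hwrfl]
    rw [← Finset.sum_div, ← hμA ε hε, div_self (ne_of_gt (hμpos ε hε))]
  have hwpos : ∀ ε, 0 < ε → ∀ x, 0 < w ε x := by
    intro ε hε x
    exact div_pos (hppos ε hε x) (hμpos ε hε)
  have hwle1 : ∀ ε, 0 < ε → ∀ x ∈ A, w ε x ≤ 1 := by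
    intro ε hε x hx
    rw [hwrfl]
    rw [div_le_one (hμpos ε hε), hμA ε hε]
    exact Finset.single_le_sum (fun y _ => le_of_lt (hppos ε hε y)) hx
  -- sum of q0 is S
  have hq0sum : ∀ ε, 0 < ε → ∑ y, q0 ε y = S ε := by
    intro ε hε
    rw [← Finset.sum_filter_add_sum_filter_not Finset.univ (fun x => R x = 1)]
    have h2 : ∀ x ∈ Finset.univ.filter (fun x => ¬ R x = 1), q0 ε x = 0 := by
      intro x hx
      have := (Finset.mem_filter.mp hx).2
      rcases hR x with h | h
      · exact hq0off ε hε x h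
      · exact absurd h this
    rw [Finset.sum_congr rfl h2, Finset.sum_const_zero, add_zero, hSrfl]
    exact Finset.sum_congr rfl (hq0A ε hε)
  -- exact formula for the normalized relative second moment
  have hFeq : ∀ ε, 0 < ε → σ2 ε / μ ε ^ 2 = (∑ x ∈ A, w ε x * (S ε / T ε x)) - 1 := by
    intro ε hε
    have hμne : (μ ε) ^ 2 ≠ 0 := pow_ne_zero 2 (ne_of_gt (hμpos ε hε))
    rw [hσ2, sub_div, div_self hμne]
    congr 1
    have hsplit : ∑ x, (R x * p ε x) ^ 2 / q ε x = ∑ x ∈ A, (p ε x) ^ 2 / q ε x := by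
      rw [← Finset.sum_filter_add_sum_filter_not Finset.univ (fun x => R x = 1)]
      have h2 : ∀ x ∈ Finset.univ.filter (fun x => ¬ R x = 1),
          (R x * p ε x) ^ 2 / q ε x = 0 := by
        intro x hx
        have := (Finset.mem_filter.mp hx).2
        rcases hR x with h | h
        · rw [h, zero_mul]; norm_num
        · exact absurd h this
      rw [Finset.sum_congr rfl h2, Finset.sum_const_zero, add_zero]
      apply Finset.sum_congr rfl
      intro x hx
      rw [(Finset.mem_filter.mp hx).2, one_mul]
    rw [hsplit, Finset.sum_div]
    apply Finset.sum_congr rfl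
    intro x hx
    have hqx : q ε x = w ε x * T ε x / S ε := by
      rw [hq, hq0sum ε hε, hq0A ε hε x hx]
    rw [hqx, div_right_comm, ← div_pow]
    have hwne : w ε x ≠ 0 := ne_of_gt (hwpos ε hε x)
    rw [← hwrfl, div_div_eq_mul_div]
    have : w ε x ^ 2 * S ε = w ε x * (w ε x * S ε) := by ring
    rw [this, mul_div_mul_left _ _ hwne, mul_div_assoc]
  -- limits of the correction factors
  have htlim : ∀ x ∈ A, ∀ k ≤ n, Tendsto (fun ε => t ε k x) L (nhds 1) := by
    intro x hx k hk
    exact happrox k hk x (fun ε hε => hcondpos x hx k ε hε)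
  have hTlim : ∀ x ∈ A, Tendsto (fun ε => T ε x) L (nhds 1) := by
    intro x hx
    rw [hT]
    have : Tendsto (fun ε => ∏ i ∈ Finset.range n, t ε (i+1) x / t ε i x) L
        (nhds (∏ _i ∈ Finset.range n, (1:ℝ))) := by
      apply tendsto_finset_prod
      intro i hi
      have hi' := Finset.mem_range.mp hi
      have h1 := htlim x hx (i+1) (by omega)
      have h2 := htlim x hx i (by omega)
      have := Tendsto.div h1 h2 one_ne_zero
      simpa [Pi.div_def] using this
    simpa using this
  -- limit of S
  have hδlim : Tendsto (fun ε => ∑ x ∈ A, |T ε x - 1|) L (nhds 0) := by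
    have : Tendsto (fun ε => ∑ x ∈ A, |T ε x - 1|) L (nhds (∑ _x ∈ A, |(0:ℝ)|)) := by
      apply tendsto_finset_sum
      intro x hx
      have h := ((hTlim x hx).sub (tendsto_const_nhds (x := (1:ℝ)) (f := L))).abs
      simpa using h
    simpa using this
  have hSsub : Tendsto (fun ε => S ε - 1) L (nhds 0) := by
    apply squeeze_zero_norm' _ hδlim
    filter_upwards [self_mem_nhdsWithin] with ε hε
    have hε' : (0:ℝ) < ε := hε
    rw [Real.norm_eq_abs]
    calc |S ε - 1| = |∑ x ∈ A, w ε x * (T ε x - 1)| := by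
          congr 1
          rw [hSrfl]
          nth_rewrite 1 [← hwsum ε hε']
          rw [← Finset.sum_sub_distrib]
          apply Finset.sum_congr rfl
          intro x hx
          ring
      _ ≤ ∑ x ∈ A, |w ε x * (T ε x - 1)| := Finset.abs_sum_le_sum_abs _ _
      _ ≤ ∑ x ∈ A, |T ε x - 1| := by
          apply Finset.sum_le_sum
          intro x hx
          rw [abs_mul]
          apply mul_le_of_le_one_left (abs_nonneg _)
          rw [abs_of_pos (hwpos ε hε' x)]
          exact hwle1 ε hε' x hx
  have hSlim : Tendsto S L (nhds 1) := by
    have := hSsub.add (tendsto_const_nhds (x := (1:ℝ)) (f := L))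
    simpa using this
  -- limit of the bounding sum G
  have hGlim : Tendsto (fun ε => ∑ x ∈ A, |S ε / T ε x - 1|) L (nhds 0) := by
    have : Tendsto (fun ε => ∑ x ∈ A, |S ε / T ε x - 1|) L (nhds (∑ _x ∈ A, |(0:ℝ)|)) := by
      apply tendsto_finset_sum
      intro x hx
      have h1 : Tendsto (fun ε => S ε / T ε x) L (nhds 1) := by
        have := Tendsto.div hSlim (hTlim x hx) one_ne_zero
        simpa [Pi.div_def] using this
      simpa using Tendsto.abs (h1.sub (tendsto_const_nhds (x := (1:ℝ)) (f := L)))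
    simpa using this
  -- final squeeze
  apply squeeze_zero_norm' _ hGlim
  filter_upwards [self_mem_nhdsWithin] with ε hε
  have hε' : (0:ℝ) < ε := hε
  rw [Real.norm_eq_abs, hFeq ε hε']
  calc |(∑ x ∈ A, w ε x * (S ε / T ε x)) - 1| = |∑ x ∈ A, w ε x * (S ε / T ε x - 1)| := by
        congr 1
        nth_rewrite 1 [← hwsum ε hε']
        rw [← Finset.sum_sub_distrib]
        apply Finset.sum_congr rfl
        intro x hx
        ring
    _ ≤ ∑ x ∈ A, |w ε x * (S ε / T ε x - 1)| := Finset.abs_sum_le_sum_abs _ _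
    _ ≤ ∑ x ∈ A, |S ε / T ε x - 1| := by
        apply Finset.sum_le_sum
        intro x hx
        rw [abs_mul]
        apply mul_le_of_le_one_left (abs_nonneg _)
        rw [abs_of_pos (hwpos ε hε' x)]
        exact hwle1 ε hε' x hx
end

section
/- (Mixture IS variance bound) Let q^(1),...,q^(m) be probability distributions on a finite set Ω and q = Σ_k w_k q^(k) with weights w_k > 0, Σ_k w_k = 1. For a fixed flow k with indicator R_k, target μ_k = E_p[R_k], suppose q^(k)(x) > 0 whenever R_k(x)p(x) > 0. Then the one-run variance of the IS estimator for μ_k using the mixture q satisfies σ_q² ≤ (1/w_k − 1)·μ_k² + (1/w_k)·σ_{q^(k)}², where σ_{q^(k)}² is the one-run variance using the pure distribution q^(k). Consequently, if each q^(k) yields BRE for flow k, the mixture yields BRE for all flows simultaneously. -/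
open Finset

/-- Mixture importance sampling variance bound: estimating `μ_k = E_p[R_k]`
with the mixture `q = Σ_j w_j q^(j)` has one-run variance at most
`(1/w_k − 1)·μ_k² + (1/w_k)·σ_{q^(k)}²` for every flow `k`; in particular if
each pure distribution yields BRE for its own flow, the mixture yields BRE
for all flows simultaneously. -/
theorem mixture_is_variance_bound
    {Ω : Type*} [Fintype Ω] {m : ℕ}
    (p : Ω → ℝ) (hp : ∀ x, 0 ≤ p x) (hp1 : ∑ x, p x = 1)
    (R : Fin m → Ω → ℝ) (hR : ∀ k x, R k x = 0 ∨ R k x = 1)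
    (μ : Fin m → ℝ) (hμ : ∀ k, μ k = ∑ x, R k x * p x)
    (qp : Fin m → Ω → ℝ) (hqp0 : ∀ k x, 0 ≤ qp k x)
    (hqp1 : ∀ k, ∑ x, qp k x = 1)
    (hsupp : ∀ k x, 0 < R k x * p x → 0 < qp k x)
    (w : Fin m → ℝ) (hw : ∀ k, 0 < w k) (hw1 : ∑ k, w k = 1)
    (q : Ω → ℝ) (hq : ∀ x, q x = ∑ k, w k * qp k x)
    -- one-run variances with the mixture and with the pure distributions
    (σ2mix : Fin m → ℝ)
    (hσ2mix : ∀ k, σ2mix k = (∑ x, (R k x * p x) ^ 2 / q x) - (μ k) ^ 2)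
    (σ2pure : Fin m → ℝ)
    (hσ2pure : ∀ k, σ2pure k = (∑ x, (R k x * p x) ^ 2 / qp k x) - (μ k) ^ 2) :
    ∀ k, σ2mix k ≤ (1 / w k - 1) * (μ k) ^ 2 + (1 / w k) * σ2pure k := by
  intro k
  have hwk := hw k
  have key : ∀ x, (R k x * p x) ^ 2 / q x ≤ (1 / w k) * ((R k x * p x) ^ 2 / qp k x) := by
    intro x
    rcases le_or_gt (R k x * p x) 0 with h | h
    · have h0 : R k x * p x = 0 := le_antisymm h (mul_nonneg (by rcases hR k x with h'|h' <;> simp [h']) (hp x))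
      simp [h0]
    · have hqpk : 0 < qp k x := hsupp k x h
      have hqx : w k * qp k x ≤ q x := by
        rw [hq x]
        refine Finset.single_le_sum (f := fun j => w j * qp j x) ?_ (Finset.mem_univ k)
        intro j _; exact mul_nonneg (hw j).le (hqp0 j x)
      have hqpos : 0 < q x := lt_of_lt_of_le (by positivity) hqx
      rw [show (1 / w k) * ((R k x * p x) ^ 2 / qp k x) = (R k x * p x) ^ 2 / (w k * qp k x) by
        field_simp]
      exact div_le_div_of_nonneg_left (by positivity) (by positivity) hqx
  have hsum : (∑ x, (R k x * p x) ^ 2 / q x) ≤ (1 / w k) * ∑ x, (R k x * p x) ^ 2 / qp k x := by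
    rw [Finset.mul_sum]
    exact Finset.sum_le_sum fun x _ => key x
  rw [hσ2mix k, hσ2pure k]
  nlinarith [hsum, sq_nonneg (μ k)]
end

section
/- (Sum-of-SEEDs approximation has vanishing relative error) Suppose link failure probabilities satisfy p_i = O(ε) as ε → 0, S is a fixed nonempty antichain of subsets of {1,...,n}, μ(ε) = P[X ∈ span(S)], and Φ_sum = Σ_{S∈S} Φ(S) where Φ(S) = ∏_{i∈S} p_i. Then Φ_sum = μ(ε)·(1 + o(1)) as ε → 0. -/
open Finset Filter


lemma key_id {n : ℕ} (q : Fin n → ℝ) (T : Finset (Fin n)) :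
    ∑ L ∈ univ.filter (fun L : Finset (Fin n) => T ⊆ L),
      (∏ i ∈ L, q i) * ∏ i ∈ Lᶜ, (1 - q i) = ∏ i ∈ T, q i := by
  have h1 : ∑ L ∈ univ.filter (fun L : Finset (Fin n) => T ⊆ L),
      (∏ i ∈ L, q i) * ∏ i ∈ Lᶜ, (1 - q i)
      = ∑ M ∈ Tᶜ.powerset, (∏ i ∈ T ∪ M, q i) * ∏ i ∈ (T ∪ M)ᶜ, (1 - q i) := by
    refine Finset.sum_bij' (fun L _ => L \ T) (fun M _ => T ∪ M) ?_ ?_ ?_ ?_ ?_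
    · intro L hL
      simp only [mem_filter, mem_univ, true_and] at hL
      simp only [mem_powerset]
      intro i hi
      rw [Finset.mem_sdiff] at hi
      simp [hi.2]
    · intro M hM
      simp
    · intro L hL
      simp only [mem_filter, mem_univ, true_and] at hL
      exact Finset.union_sdiff_of_subset hL
    · intro M hM
      simp only [mem_powerset] at hM
      rw [Finset.union_sdiff_cancel_left]
      rw [Finset.disjoint_left]
      intro a ha hM'
      have := hM hM'
      simp at this
      exact this ha
    · intro L hL
      simp only [mem_filter, mem_univ, true_and] at hL
      rw [Finset.union_sdiff_of_subset hL]
  rw [h1]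
  have h2 : ∀ M ∈ Tᶜ.powerset, (∏ i ∈ T ∪ M, q i) * ∏ i ∈ (T ∪ M)ᶜ, (1 - q i)
      = (∏ i ∈ T, q i) * ((∏ i ∈ M, q i) * ∏ i ∈ Tᶜ \ M, (1 - q i)) := by
    intro M hM
    simp only [mem_powerset] at hM
    have hdisj : Disjoint T M := by
      rw [Finset.disjoint_right]
      intro a ha
      have := hM ha
      simp at this
      exact this
    rw [Finset.prod_union hdisj]
    have : (T ∪ M)ᶜ = Tᶜ \ M := by
      rw [Finset.compl_union, sdiff_eq]; rfl
    rw [this]; ring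
  rw [Finset.sum_congr rfl h2, ← Finset.mul_sum, ← Finset.prod_add]
  simp

lemma main_est {n : ℕ} (𝒮 : Finset (Finset (Fin n)))
    (hanti : ∀ S ∈ 𝒮, ∀ S' ∈ 𝒮, S ⊆ S' → S = S')
    (q : Fin n → ℝ) (hq : ∀ i, 0 ≤ q i ∧ q i ≤ 1)
    (B : ℝ) (hB0 : 0 ≤ B) (hB : ∀ i, q i ≤ B) :
    (∑ L ∈ Finset.univ.filter (fun L : Finset (Fin n) => ∃ S ∈ 𝒮, S ⊆ L),
        ((∏ i ∈ L, q i) * ∏ i ∈ Lᶜ, (1 - q i))) ≤ ∑ S ∈ 𝒮, ∏ i ∈ S, q i ∧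
    ∑ S ∈ 𝒮, ∏ i ∈ S, q i ≤ (∑ L ∈ Finset.univ.filter (fun L : Finset (Fin n) => ∃ S ∈ 𝒮, S ⊆ L),
        ((∏ i ∈ L, q i) * ∏ i ∈ Lᶜ, (1 - q i))) + B * 𝒮.card * (∑ S ∈ 𝒮, ∏ i ∈ S, q i) := by
  set P : Finset (Fin n) → ℝ := fun L => (∏ i ∈ L, q i) * ∏ i ∈ Lᶜ, (1 - q i) with hP
  have hP0 : ∀ L, 0 ≤ P L := fun L =>
    mul_nonneg (Finset.prod_nonneg fun i _ => (hq i).1)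
      (Finset.prod_nonneg fun i _ => by linarith [(hq i).2])
  set c : Finset (Fin n) → ℕ := fun L => (𝒮.filter (· ⊆ L)).card with hc
  have hprodnn : ∀ s : Finset (Fin n), 0 ≤ ∏ i ∈ s, q i :=
    fun s => Finset.prod_nonneg fun i _ => (hq i).1
  -- representation of Φ
  have hrep : ∑ S ∈ 𝒮, ∏ i ∈ S, q i = ∑ L : Finset (Fin n), (c L : ℝ) * P L := by
    calc ∑ S ∈ 𝒮, ∏ i ∈ S, q i
        = ∑ S ∈ 𝒮, ∑ L ∈ univ.filter (fun L : Finset (Fin n) => S ⊆ L), P L := by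
          refine Finset.sum_congr rfl fun S _ => (key_id q S).symm
      _ = ∑ S ∈ 𝒮, ∑ L : Finset (Fin n), if S ⊆ L then P L else 0 := by
          simp [Finset.sum_filter]
      _ = ∑ L : Finset (Fin n), ∑ S ∈ 𝒮, if S ⊆ L then P L else 0 := Finset.sum_comm
      _ = ∑ L : Finset (Fin n), (c L : ℝ) * P L := by
          refine Finset.sum_congr rfl fun L _ => ?_
          rw [← Finset.sum_filter, Finset.sum_const, nsmul_eq_mul]
  have hc1 : ∀ L : Finset (Fin n), (∃ S ∈ 𝒮, S ⊆ L) → 1 ≤ c L := by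
    intro L ⟨S, hS, hSL⟩
    exact Finset.card_pos.mpr ⟨S, Finset.mem_filter.mpr ⟨hS, hSL⟩⟩
  have hc0 : ∀ L : Finset (Fin n), ¬(∃ S ∈ 𝒮, S ⊆ L) → c L = 0 := by
    intro L hL
    simp only [hc, Finset.card_eq_zero, Finset.filter_eq_empty_iff]
    intro S hS hSL
    exact hL ⟨S, hS, hSL⟩
  constructor
  · -- μ ≤ Φ
    rw [hrep]
    calc ∑ L ∈ Finset.univ.filter (fun L : Finset (Fin n) => ∃ S ∈ 𝒮, S ⊆ L), P L
        ≤ ∑ L ∈ Finset.univ.filter (fun L : Finset (Fin n) => ∃ S ∈ 𝒮, S ⊆ L),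
            (c L : ℝ) * P L := by
          refine Finset.sum_le_sum fun L hL => ?_
          have := hc1 L (Finset.mem_filter.mp hL).2
          refine le_mul_of_one_le_left (hP0 L) ?_
          exact_mod_cast this
      _ ≤ ∑ L : Finset (Fin n), (c L : ℝ) * P L := by
          refine Finset.sum_le_sum_of_subset_of_nonneg (Finset.filter_subset _ _)
            fun L _ _ => mul_nonneg (by positivity) (hP0 L)
  · -- Φ ≤ μ + B * card * Φ
    have hsplit : ∑ L : Finset (Fin n), (c L : ℝ) * P L
        = ∑ L ∈ Finset.univ.filter (fun L : Finset (Fin n) => ∃ S ∈ 𝒮, S ⊆ L),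
            (c L : ℝ) * P L := by
      rw [← Finset.sum_filter_add_sum_filter_not Finset.univ
        (fun L : Finset (Fin n) => ∃ S ∈ 𝒮, S ⊆ L) (fun L => (c L : ℝ) * P L)]
      have : ∑ L ∈ Finset.univ.filter (fun L : Finset (Fin n) => ¬∃ S ∈ 𝒮, S ⊆ L),
          (c L : ℝ) * P L = 0 := by
        refine Finset.sum_eq_zero fun L hL => ?_
        rw [hc0 L (Finset.mem_filter.mp hL).2]
        simp
      rw [this, add_zero]
    -- pair bound
    set d : Finset (Fin n) → ℕ := fun L => ((𝒮.filter (· ⊆ L)).offDiag).card with hd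
    have hdval : ∀ L, d L = c L * c L - c L := fun L => Finset.offDiag_card _
    have hstep1 : ∑ S ∈ 𝒮, ∏ i ∈ S, q i
        ≤ (∑ L ∈ Finset.univ.filter (fun L : Finset (Fin n) => ∃ S ∈ 𝒮, S ⊆ L), P L)
          + ∑ L : Finset (Fin n), (d L : ℝ) * P L := by
      rw [hrep, hsplit]
      have h1 : ∑ L ∈ Finset.univ.filter (fun L : Finset (Fin n) => ∃ S ∈ 𝒮, S ⊆ L),
          (c L : ℝ) * P L
          ≤ ∑ L ∈ Finset.univ.filter (fun L : Finset (Fin n) => ∃ S ∈ 𝒮, S ⊆ L),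
            (P L + (d L : ℝ) * P L) := by
        refine Finset.sum_le_sum fun L hL => ?_
        have h1 := hc1 L (Finset.mem_filter.mp hL).2
        have hd1 : (c L : ℝ) - 1 ≤ (d L : ℝ) := by
          rw [hdval L]
          have : c L - 1 ≤ c L * c L - c L := by
            have h2 : c L * (c L - 1) = c L * c L - c L := by
              rw [Nat.mul_sub, mul_one]
            rw [← h2]
            exact Nat.le_mul_of_pos_left _ h1
          calc (c L : ℝ) - 1 ≤ ((c L - 1 : ℕ) : ℝ) := by
                push_cast [h1]; ring_nf; rfl
            _ ≤ _ := by exact_mod_cast this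
        nlinarith [hP0 L]
      calc _ ≤ _ := h1
        _ = (∑ L ∈ Finset.univ.filter (fun L : Finset (Fin n) => ∃ S ∈ 𝒮, S ⊆ L), P L)
            + ∑ L ∈ Finset.univ.filter (fun L : Finset (Fin n) => ∃ S ∈ 𝒮, S ⊆ L),
              (d L : ℝ) * P L := Finset.sum_add_distrib
        _ ≤ _ := by
            refine add_le_add (le_refl _) ?_
            refine Finset.sum_le_sum_of_subset_of_nonneg (Finset.filter_subset _ _)
              fun L _ _ => mul_nonneg (by positivity) (hP0 L)
    -- rewrite the pair sum
    have hswap : ∑ L : Finset (Fin n), (d L : ℝ) * P L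
        = ∑ pr ∈ 𝒮.offDiag, ∏ i ∈ pr.1 ∪ pr.2, q i := by
      have hoff : ∀ L, (𝒮.filter (· ⊆ L)).offDiag
          = 𝒮.offDiag.filter (fun pr => pr.1 ⊆ L ∧ pr.2 ⊆ L) := by
        intro L
        ext pr
        simp only [Finset.mem_offDiag, Finset.mem_filter]
        tauto
      calc ∑ L : Finset (Fin n), (d L : ℝ) * P L
          = ∑ L : Finset (Fin n), ∑ pr ∈ 𝒮.offDiag,
              if pr.1 ⊆ L ∧ pr.2 ⊆ L then P L else 0 := by
            refine Finset.sum_congr rfl fun L _ => ?_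
            have hdL : d L = (𝒮.offDiag.filter (fun pr => pr.1 ⊆ L ∧ pr.2 ⊆ L)).card := by
              simp only [hd]; rw [hoff L]
            rw [hdL, ← Finset.sum_filter, Finset.sum_const, nsmul_eq_mul]
        _ = ∑ pr ∈ 𝒮.offDiag, ∑ L : Finset (Fin n),
              if pr.1 ⊆ L ∧ pr.2 ⊆ L then P L else 0 := Finset.sum_comm
        _ = ∑ pr ∈ 𝒮.offDiag, ∏ i ∈ pr.1 ∪ pr.2, q i := by
            refine Finset.sum_congr rfl fun pr _ => ?_
            rw [← Finset.sum_filter]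
            rw [show Finset.univ.filter (fun L : Finset (Fin n) => pr.1 ⊆ L ∧ pr.2 ⊆ L)
              = Finset.univ.filter (fun L : Finset (Fin n) => pr.1 ∪ pr.2 ⊆ L) by
                refine Finset.filter_congr fun L _ => ?_
                simp [Finset.union_subset_iff]]
            exact key_id q _
    -- bound each pair term
    have hmono : ∀ s t : Finset (Fin n), s ⊆ t → ∏ i ∈ t, q i ≤ ∏ i ∈ s, q i := by
      intro s t hst
      rw [← Finset.prod_sdiff hst]
      have h1 : ∏ i ∈ t \ s, q i ≤ 1 :=
        Finset.prod_le_one (fun i _ => (hq i).1) (fun i _ => (hq i).2)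
      exact mul_le_of_le_one_left (hprodnn s) h1
    have hpair : ∀ pr ∈ 𝒮.offDiag, ∏ i ∈ pr.1 ∪ pr.2, q i ≤ B * ∏ i ∈ pr.1, q i := by
      intro pr hpr
      obtain ⟨h1, h2, h3⟩ := Finset.mem_offDiag.mp hpr
      have hns : ¬ pr.2 ⊆ pr.1 := fun h => h3 ((hanti _ h2 _ h1 h).symm)
      obtain ⟨i₀, hi₀2, hi₀1⟩ := Finset.not_subset.mp hns
      calc ∏ i ∈ pr.1 ∪ pr.2, q i ≤ ∏ i ∈ insert i₀ pr.1, q i := by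
            refine hmono _ _ ?_
            exact Finset.insert_subset (Finset.mem_union_right _ hi₀2)
              Finset.subset_union_left
        _ = q i₀ * ∏ i ∈ pr.1, q i := Finset.prod_insert hi₀1
        _ ≤ B * ∏ i ∈ pr.1, q i :=
            mul_le_mul_of_nonneg_right (hB i₀) (hprodnn _)
    have hfinal : ∑ pr ∈ 𝒮.offDiag, ∏ i ∈ pr.1 ∪ pr.2, q i
        ≤ B * 𝒮.card * ∑ S ∈ 𝒮, ∏ i ∈ S, q i := by
      calc ∑ pr ∈ 𝒮.offDiag, ∏ i ∈ pr.1 ∪ pr.2, q i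
          ≤ ∑ pr ∈ 𝒮.offDiag, B * ∏ i ∈ pr.1, q i := Finset.sum_le_sum hpair
        _ ≤ ∑ pr ∈ 𝒮 ×ˢ 𝒮, B * ∏ i ∈ pr.1, q i := by
            refine Finset.sum_le_sum_of_subset_of_nonneg ?_
              (fun pr _ _ => mul_nonneg hB0 (hprodnn _))
            intro pr hpr
            have := Finset.mem_offDiag.mp hpr
            exact Finset.mem_product.mpr ⟨this.1, this.2.1⟩
        _ = B * 𝒮.card * ∑ S ∈ 𝒮, ∏ i ∈ S, q i := by
            rw [Finset.sum_product, Finset.mul_sum]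
            refine Finset.sum_congr rfl fun S _ => ?_
            simp only [Finset.sum_const, nsmul_eq_mul]
            ring
    calc ∑ S ∈ 𝒮, ∏ i ∈ S, q i ≤ _ := hstep1
      _ ≤ _ := by rw [hswap]; gcongr


/-- Sum-of-SEEDs approximation has vanishing relative error: if link failure
probabilities are `O(ε)` and `𝒮` is a fixed nonempty antichain, then
`Φ_sum = Σ_{S∈𝒮} ∏_{i∈S} p_i = μ(ε)·(1 + o(1))` where
`μ(ε) = P[X ∈ span(𝒮)]`. -/
theorem sum_of_seeds_vre
    {n : ℕ} (𝒮 : Finset (Finset (Fin n))) (h𝒮 : 𝒮.Nonempty)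
    (hanti : ∀ S ∈ 𝒮, ∀ S' ∈ 𝒮, S ⊆ S' → S = S')
    (p : ℝ → Fin n → ℝ)
    (hrange : ∀ᶠ ε in nhdsWithin 0 (Set.Ioi 0), ∀ i, 0 ≤ p ε i ∧ p ε i ≤ 1)
    (CO : ℝ)
    (hO : ∀ᶠ ε in nhdsWithin 0 (Set.Ioi 0), ∀ i, p ε i ≤ CO * ε)
    (μ : ℝ → ℝ)
    (hμ : ∀ ε, μ ε = ∑ L ∈ Finset.univ.filter
        (fun L : Finset (Fin n) => ∃ S ∈ 𝒮, S ⊆ L),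
      ((∏ i ∈ L, p ε i) * ∏ i ∈ Lᶜ, (1 - p ε i)))
    (Φsum : ℝ → ℝ)
    (hΦsum : ∀ ε, Φsum ε = ∑ S ∈ 𝒮, ∏ i ∈ S, p ε i) :
    ∀ δ > (0:ℝ), ∀ᶠ ε in nhdsWithin 0 (Set.Ioi 0),
      |Φsum ε - μ ε| ≤ δ * μ ε := by
  intro δ hδ
  have hK : (0:ℝ) < 𝒮.card := by exact_mod_cast Finset.card_pos.mpr h𝒮
  have h1δ : (0:ℝ) < 1 + δ := by linarith
  set η := δ / ((1 + δ) * 𝒮.card) with hη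
  have hηpos : 0 < η := div_pos hδ (by positivity)
  have htend : Filter.Tendsto (fun ε : ℝ => CO * ε) (nhdsWithin 0 (Set.Ioi 0)) (nhds 0) := by
    have hcont : Continuous (fun x : ℝ => CO * x) := continuous_const.mul continuous_id
    have h := hcont.tendsto (0 : ℝ)
    rw [mul_zero] at h
    exact Filter.Tendsto.mono_left h nhdsWithin_le_nhds
  have hsmall : ∀ᶠ ε in nhdsWithin 0 (Set.Ioi 0), CO * ε < η := by
    have := htend.eventually (eventually_lt_nhds hηpos)
    simpa using this
  filter_upwards [hrange, hO, hsmall] with ε h1 h2 h3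
  rw [hμ ε, hΦsum ε]
  set B := max (CO * ε) 0 with hBdef
  have hB0 : 0 ≤ B := le_max_right _ _
  have hB : ∀ i, p ε i ≤ B := fun i => (h2 i).trans (le_max_left _ _)
  obtain ⟨hA, hBd⟩ := main_est 𝒮 hanti (p ε) h1 B hB0 hB
  set Φ := ∑ S ∈ 𝒮, ∏ i ∈ S, p ε i with hΦdef
  set m := ∑ L ∈ Finset.univ.filter
      (fun L : Finset (Fin n) => ∃ S ∈ 𝒮, S ⊆ L),
    ((∏ i ∈ L, p ε i) * ∏ i ∈ Lᶜ, (1 - p ε i)) with hmdef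
  have hBK : B * 𝒮.card ≤ δ / (1 + δ) := by
    have hBη : B ≤ η := max_le h3.le hηpos.le
    calc B * 𝒮.card ≤ η * 𝒮.card := mul_le_mul_of_nonneg_right hBη hK.le
      _ = δ / (1 + δ) := by
          rw [hη]
          field_simp
  have hΦ0 : 0 ≤ Φ := Finset.sum_nonneg fun S _ =>
    Finset.prod_nonneg fun i _ => (h1 i).1
  have habs : |Φ - m| = Φ - m := abs_of_nonneg (by linarith)
  rw [habs]
  have h4 : Φ ≤ m + (δ / (1 + δ)) * Φ := by
    have := mul_le_mul_of_nonneg_right hBK hΦ0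
    calc Φ ≤ m + B * 𝒮.card * Φ := hBd
      _ ≤ m + (δ / (1 + δ)) * Φ := by linarith
  have h5 : (1 + δ) * Φ ≤ (1 + δ) * m + δ * Φ := by
    have h6 := mul_le_mul_of_nonneg_left h4 h1δ.le
    calc (1 + δ) * Φ ≤ (1 + δ) * (m + (δ / (1 + δ)) * Φ) := h6
      _ = (1 + δ) * m + δ * Φ := by field_simp
  linarith
end
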